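/- For every a ∈ ℝ and x > 0, the function x ↦ E_g[ tanh²( a + g √x ) ] is differentiable and its derivative equals 3 · E_g[ cosh^{−4}( a + g √x ) ] − 2 · E_g[ cosh^{−2}( a + g √x ) ], where E_g denotes expectation over a standard Gaussian g. -/

import Mathlib

/-!
Differentiating under the integral sign, `d/ds E[ψ(a + g√s)] = E[ψ'(a + g√s) g] / (2√s)`, and
Gaussian integration by parts (Stein's lemma `E[g f(g)] = E[f'(g)]`) turns the right-hand side
into `E[ψ''(a + g√s)] / 2`: Gaussian smoothing solves the heat equation. For `ψ = tanh²`, with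
`tanh' = 1 - tanh² = cosh⁻²`, one gets `ψ'' / 2 = (1 - 3 tanh²)(1 - tanh²) = 3 cosh⁻⁴ - 2 cosh⁻²`.
-/

open Real MeasureTheory ProbabilityTheory Set Filter
open scoped NNReal

lemma measurable_of_hasDerivAt_forall {f f' : ℝ → ℝ} (hf : ∀ y, HasDerivAt f (f' y) y) :
    Measurable f' :=
  funext (fun y ↦ (hf y).deriv) ▸ measurable_deriv f

lemma hasDerivAt_gaussianPDFReal (μ : ℝ) (v : ℝ≥0) (x : ℝ) :
    HasDerivAt (gaussianPDFReal μ v) (-((x - μ) / v) * gaussianPDFReal μ v x) x := by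
  rw [gaussianPDFReal_def]
  refine ((((hasDerivAt_id' x).sub_const μ).fun_pow 2).fun_neg.div_const (2 * (v : ℝ))).exp
    |>.const_mul (√(2 * π * v))⁻¹ |>.congr_deriv ?_
  ring

section Gaussian

variable {μ : ℝ} {v : ℝ≥0} {f f' : ℝ → ℝ} {C C' : ℝ}

lemma integrable_gaussianReal_iff_integrable_smul {E : Type*} [NormedAddCommGroup E]
    [NormedSpace ℝ E] {f : ℝ → E} (hv : v ≠ 0) :
    Integrable f (gaussianReal μ v) ↔ Integrable (fun x ↦ gaussianPDFReal μ v x • f x) := by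
  rw [gaussianReal_of_var_ne_zero _ hv, integrable_withDensity_iff_integrable_smul'
    (measurable_gaussianPDF μ v) (ae_of_all _ fun _ ↦ gaussianPDF_lt_top)]
  simp only [toReal_gaussianPDF]

theorem integral_sub_mul_gaussianReal (hf : ∀ x, HasDerivAt f (f' x) x)
    (hf_int : Integrable f (gaussianReal μ v))
    (hxf_int : Integrable (fun x ↦ (x - μ) * f x) (gaussianReal μ v))
    (hf'_int : Integrable f' (gaussianReal μ v)) :
    ∫ x, (x - μ) * f x ∂gaussianReal μ v = v * ∫ x, f' x ∂gaussianReal μ v := by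
  rcases eq_or_ne v 0 with rfl | hv
  · simp [gaussianReal_zero_var]
  set p := gaussianPDFReal μ v with hp_def
  have hp x : HasDerivAt (fun x ↦ -(v * p x)) ((x - μ) * p x) x := by
    have hv' : (v : ℝ) ≠ 0 := mod_cast hv
    refine ((hasDerivAt_gaussianPDFReal μ v x).const_mul (v : ℝ)).fun_neg.congr_deriv ?_
    rw [← hp_def]
    field_simp
  rw [integrable_gaussianReal_iff_integrable_smul hv] at hf_int hxf_int hf'_int
  rw [integral_gaussianReal_eq_integral_smul hv, integral_gaussianReal_eq_integral_smul hv]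
  simp only [smul_eq_mul] at hf_int hxf_int hf'_int ⊢
  have hibp := integral_mul_deriv_eq_deriv_mul_of_integrable (fun x _ ↦ hf x) (fun x _ ↦ hp x)
    (hxf_int.congr (ae_of_all _ fun x ↦ by simp only [Pi.mul_apply]; ring))
    ((hf'_int.const_mul (-v)).congr (ae_of_all _ fun x ↦ by simp only [Pi.mul_apply]; ring))
    ((hf_int.const_mul (-v)).congr (ae_of_all _ fun x ↦ by simp only [Pi.mul_apply]; ring))
  calc ∫ x, p x * ((x - μ) * f x) = ∫ x, f x * ((x - μ) * p x) := by
        congr with x; ring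
    _ = v * ∫ x, p x * f' x := by
        rw [hibp, ← integral_const_mul, ← integral_neg]
        congr with x; ring

lemma integrable_comp_add_mul_gaussianReal (hf : Measurable f) (hf_bdd : ∀ y, |f y| ≤ C)
    (a c : ℝ) : Integrable (fun g ↦ f (a + g * c)) (gaussianReal μ v) :=
  .of_bound (hf.comp (by fun_prop)).aestronglyMeasurable C (ae_of_all _ fun _ ↦ hf_bdd _)

lemma integrable_mul_comp_add_mul_gaussianReal (hf : Measurable f) (hf_bdd : ∀ y, |f y| ≤ C)
    (a c : ℝ) : Integrable (fun g ↦ g * f (a + g * c)) (gaussianReal μ v) :=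
  ((memLp_id_gaussianReal 1).integrable le_rfl).mul_bdd
    (hf.comp (by fun_prop)).aestronglyMeasurable (ae_of_all _ fun _ ↦ hf_bdd _)

end Gaussian

theorem integral_mul_comp_add_mul_gaussianReal {f f' : ℝ → ℝ} {C C' : ℝ}
    (hf : ∀ y, HasDerivAt f (f' y) y) (hf_bdd : ∀ y, |f y| ≤ C) (hf'_bdd : ∀ y, |f' y| ≤ C')
    (a c : ℝ) :
    ∫ g, g * f (a + g * c) ∂gaussianReal 0 1 = c * ∫ g, f' (a + g * c) ∂gaussianReal 0 1 := by
  have hf_meas : Measurable f :=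
    (continuous_iff_continuousAt.2 fun y ↦ (hf y).continuousAt).measurable
  have hf_comp g : HasDerivAt (fun g ↦ f (a + g * c)) (f' (a + g * c) * c) g :=
    (hf _).comp g (((hasDerivAt_id' g).mul_const c).const_add a) |>.congr_deriv (by simp)
  have := integral_sub_mul_gaussianReal (μ := 0) (v := 1) hf_comp
    (integrable_comp_add_mul_gaussianReal hf_meas hf_bdd a c)
    (by simpa using integrable_mul_comp_add_mul_gaussianReal hf_meas hf_bdd a c)
    ((integrable_comp_add_mul_gaussianReal (measurable_of_hasDerivAt_forall hf)
      hf'_bdd a c).mul_const c)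
  simpa [integral_mul_const, mul_comm c] using this

theorem hasDerivAt_integral_comp_add_mul_sqrt {ψ ψ' ψ'' : ℝ → ℝ} {C₀ C₁ C₂ : ℝ}
    (hψ : ∀ y, HasDerivAt ψ (ψ' y) y) (hψ' : ∀ y, HasDerivAt ψ' (ψ'' y) y)
    (hψ_bdd : ∀ y, |ψ y| ≤ C₀) (hψ'_bdd : ∀ y, |ψ' y| ≤ C₁) (hψ''_bdd : ∀ y, |ψ'' y| ≤ C₂)
    (a : ℝ) {x : ℝ} (hx : 0 < x) :
    HasDerivAt (fun s ↦ ∫ g, ψ (a + g * √s) ∂gaussianReal 0 1)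
      (2⁻¹ * ∫ g, ψ'' (a + g * √x) ∂gaussianReal 0 1) x := by
  have hψ_meas : Measurable ψ :=
    (continuous_iff_continuousAt.2 fun y ↦ (hψ y).continuousAt).measurable
  have hψ'_meas : Measurable ψ' := measurable_of_hasDerivAt_forall hψ
  have h_deriv : ∀ g, ∀ s ∈ Ioi (x / 2),
      HasDerivAt (fun s ↦ ψ (a + g * √s)) (ψ' (a + g * √s) * (g / (2 * √s))) s := by
    intro g s hs
    have hs : 0 < s := (half_pos hx).trans hs
    refine (hψ _).comp s (((hasDerivAt_sqrt hs.ne').const_mul g).const_add a) |>.congr_deriv ?_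
    ring
  have h_bound : ∀ g, ∀ s ∈ Ioi (x / 2),
      ‖ψ' (a + g * √s) * (g / (2 * √s))‖ ≤ C₁ * (|g| / (2 * √(x / 2))) := by
    intro g s hs
    have hC₁ : 0 ≤ C₁ := (abs_nonneg _).trans (hψ'_bdd 0)
    have hs0 : 0 < s := (half_pos hx).trans hs
    rw [Real.norm_eq_abs, abs_mul, abs_div, abs_of_pos (by positivity : 0 < 2 * √s)]
    gcongr
    · exact hψ'_bdd _
    · exact hs.le
  have h_bound_int : Integrable (fun g : ℝ ↦ C₁ * (|g| / (2 * √(x / 2)))) (gaussianReal 0 1) :=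
    (((memLp_id_gaussianReal 1).integrable le_rfl).abs.div_const _).const_mul _
  obtain ⟨-, hD⟩ := hasDerivAt_integral_of_dominated_loc_of_deriv_le
    (Ioi_mem_nhds (half_lt_self hx))
    (Eventually.of_forall fun s ↦
      (integrable_comp_add_mul_gaussianReal hψ_meas hψ_bdd a (√s)).aestronglyMeasurable)
    (integrable_comp_add_mul_gaussianReal hψ_meas hψ_bdd a (√x))
    (by fun_prop) (ae_of_all _ h_bound) h_bound_int (ae_of_all _ h_deriv)
  refine hD.congr_deriv ?_
  have hx' : 0 < √x := sqrt_pos.2 hx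
  calc ∫ g, ψ' (a + g * √x) * (g / (2 * √x)) ∂gaussianReal 0 1
      = (2 * √x)⁻¹ * ∫ g, g * ψ' (a + g * √x) ∂gaussianReal 0 1 := by
        rw [← integral_const_mul]
        congr with g
        ring
    _ = (2 * √x)⁻¹ * (√x * ∫ g, ψ'' (a + g * √x) ∂gaussianReal 0 1) := by
        rw [integral_mul_comp_add_mul_gaussianReal hψ' hψ'_bdd hψ''_bdd]
    _ = 2⁻¹ * ∫ g, ψ'' (a + g * √x) ∂gaussianReal 0 1 := by
        field_simp

lemma hasDerivAt_tanh (y : ℝ) : HasDerivAt tanh (1 - tanh y ^ 2) y := by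
  rw [show tanh = fun y ↦ sinh y / cosh y from funext tanh_eq_sinh_div_cosh]
  refine ((hasDerivAt_sinh y).div (hasDerivAt_cosh y) (cosh_pos y).ne').congr_deriv ?_
  have := (cosh_pos y).ne'
  field_simp

lemma hasDerivAt_tanh_sq (y : ℝ) :
    HasDerivAt (fun y ↦ tanh y ^ 2) (2 * tanh y * (1 - tanh y ^ 2)) y :=
  ((hasDerivAt_tanh y).fun_pow 2).congr_deriv (by push_cast; ring)

lemma hasDerivAt_two_mul_tanh_mul_one_sub_tanh_sq (y : ℝ) :
    HasDerivAt (fun y ↦ 2 * tanh y * (1 - tanh y ^ 2))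
      (2 * (1 - 3 * tanh y ^ 2) * (1 - tanh y ^ 2)) y :=
  (((hasDerivAt_tanh y).const_mul 2).mul
    (((hasDerivAt_tanh y).fun_pow 2).const_sub 1)).congr_deriv (by push_cast; ring)

lemma abs_tanh_le_one (y : ℝ) : |tanh y| ≤ 1 :=
  abs_le.2 ⟨(neg_one_lt_tanh y).le, (tanh_lt_one y).le⟩

lemma inv_cosh_sq (y : ℝ) : (cosh y ^ 2)⁻¹ = 1 - tanh y ^ 2 := by
  have := (cosh_pos y).ne'
  rw [tanh_eq_sinh_div_cosh]
  field_simp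
  linear_combination -cosh_sq y

lemma abs_inv_cosh_pow_le_one (y : ℝ) (n : ℕ) : |(cosh y ^ n)⁻¹| ≤ 1 := by
  rw [abs_of_pos (by positivity)]
  exact inv_le_one_of_one_le₀ (one_le_pow₀ (one_le_cosh y))

/-- For every `a ∈ ℝ` and `x > 0`, the map `x ↦ E_g[tanh²(a + g√x)]` (expectation over
a standard Gaussian `g`) is differentiable at `x`, with derivative
`3 E_g[cosh⁻⁴(a + g√x)] - 2 E_g[cosh⁻²(a + g√x)]`. -/
theorem sk_overlap_derivative (a x : ℝ) (hx : 0 < x) :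
    HasDerivAt
      (fun s : ℝ => ∫ g : ℝ, (Real.tanh (a + g * Real.sqrt s)) ^ 2 ∂(gaussianReal 0 1))
      (3 * ∫ g : ℝ, ((Real.cosh (a + g * Real.sqrt x)) ^ 4)⁻¹ ∂(gaussianReal 0 1)
        - 2 * ∫ g : ℝ, ((Real.cosh (a + g * Real.sqrt x)) ^ 2)⁻¹ ∂(gaussianReal 0 1))
      x := by
  have ht y : -1 ≤ tanh y ∧ tanh y ≤ 1 := abs_le.1 (abs_tanh_le_one y)
  have ht2 y : 0 ≤ 1 - tanh y ^ 2 := by nlinarith [ht y]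
  have hψ_bdd y : |tanh y ^ 2| ≤ 1 := abs_le.2 ⟨by nlinarith, by nlinarith [ht2 y]⟩
  have hψ'_bdd y : |2 * tanh y * (1 - tanh y ^ 2)| ≤ 2 := by
    obtain ⟨h₁, h₂⟩ := ht y
    exact abs_le.2 ⟨by nlinarith [mul_nonneg (neg_le_iff_add_nonneg.1 h₁) (ht2 y)],
      by nlinarith [mul_nonneg (sub_nonneg.2 h₂) (ht2 y)]⟩
  have hψ''_bdd y : |2 * (1 - 3 * tanh y ^ 2) * (1 - tanh y ^ 2)| ≤ 2 :=
    abs_le.2 ⟨by nlinarith [sq_nonneg (tanh y), ht2 y], by nlinarith [sq_nonneg (tanh y), ht2 y]⟩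
  refine (hasDerivAt_integral_comp_add_mul_sqrt hasDerivAt_tanh_sq
    hasDerivAt_two_mul_tanh_mul_one_sub_tanh_sq hψ_bdd hψ'_bdd hψ''_bdd a hx).congr_deriv ?_
  have h_int (n : ℕ) : Integrable (fun g ↦ (cosh (a + g * √x) ^ n)⁻¹) (gaussianReal 0 1) :=
    integrable_comp_add_mul_gaussianReal (f := fun y ↦ (cosh y ^ n)⁻¹) (by fun_prop)
      (abs_inv_cosh_pow_le_one · n) a √x
  rw [← integral_const_mul, ← integral_const_mul, ← integral_const_mul,
    ← integral_sub ((h_int 4).const_mul 3) ((h_int 2).const_mul 2)]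
  congr with g
  rw [show cosh (a + g * √x) ^ 4 = (cosh (a + g * √x) ^ 2) ^ 2 by ring, ← inv_pow, inv_cosh_sq]
  ring
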